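/- arXiv:math/9902071 — 4 statements merged into one kernel-verified Lean document; each statement's English description precedes it below -/
import Mathlib

section
/- Let F be the filter on ω^ω of all A with order type of ω^ω \ A less than ω^ω. If X ⊆ ω^ω is F-positive and Φ : X → ω^ω is an order isomorphism, then for all A ⊆ X, A is in the restriction of F to X (i.e., A = X ∩ B for some B ∈ F) if and only if Φ(A) ∈ F. In particular, F is homogeneous. -/
/-!
An order isomorphism carries complements to complements and preserves order types, so `Φ(A)` is
co-small in `ω^ω` exactly when `X \ A` is small. And `A` is the trace on `X` of a co-small set
iff `X \ A` is small: if `A = X ∩ B` then `X \ A ⊆ Bᶜ`, and conversely `B = A ∪ Xᶜ` has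
complement `X \ A`.
-/

/-- The order type of a set of ordinals (here, of elements of `ω^ω`). -/
noncomputable def otype {α : Type*} [LinearOrder α] [WellFoundedLT α] (S : Set α) : Ordinal :=
  Ordinal.type ((· < ·) : S → S → Prop)

universe u v

open Ordinal

theorem Ordinal.lift_omega0_opow_natCast (n : ℕ) :
    lift.{v} (ω ^ (n : Ordinal.{u})) = ω ^ (n : Ordinal) := by
  induction n with
  | zero => simp
  | succ n ih => simp only [Nat.cast_succ, opow_add, opow_one, lift_mul, ih, lift_omega0]

theorem Ordinal.lt_omega0_opow_omega0_iff {a : Ordinal} :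
    a < ω ^ ω ↔ ∃ n : ℕ, a < ω ^ (n : Ordinal) := by
  simp only [lt_opow_of_isSuccLimit omega0_ne_zero isSuccLimit_omega0, lt_omega0]
  constructor
  · rintro ⟨_, ⟨n, rfl⟩, ha⟩
    exact ⟨n, ha⟩
  · rintro ⟨n, ha⟩
    exact ⟨n, ⟨n, rfl⟩, ha⟩

theorem Ordinal.lift_lt_omega0_opow_omega0 {a : Ordinal.{u}} :
    lift.{v} a < ω ^ ω ↔ a < ω ^ ω := by
  simp only [lt_omega0_opow_omega0_iff]
  exact exists_congr fun n => by rw [← lift_omega0_opow_natCast.{u, v}, lift_lt]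

section OrderType

variable {α : Type u} {β : Type v} [LinearOrder α] [WellFoundedLT α]
  [LinearOrder β] [WellFoundedLT β]

theorem otype_mono {S T : Set α} (h : S ⊆ T) : otype S ≤ otype T :=
  RelEmbedding.ordinal_type_le ⟨⟨Set.inclusion h, Set.inclusion_injective h⟩, Iff.rfl⟩

theorem lift_otype_image_of_strictMono {f : α → β} (hf : StrictMono f) (S : Set α) :
    lift.{u} (otype (f '' S)) = lift.{v} (otype S) :=
  RelIso.ordinal_lift_type_eq (RelIso.symm ⟨Equiv.Set.image f S hf.injective, hf.lt_iff_lt⟩)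

-- Universe-heterogeneous because the domain and codomain of `Φ` are `Set.Iio (ω ^ ω)` taken in
-- independent universes.
theorem otype_image_lt_omega0_opow_omega0_iff {f : α → β} (hf : StrictMono f) (S : Set α) :
    otype (f '' S) < ω ^ ω ↔ otype S < ω ^ ω := by
  rw [← lift_lt_omega0_opow_omega0.{v, u}, lift_otype_image_of_strictMono hf,
    lift_lt_omega0_opow_omega0]

theorem exists_inter_eq_and_otype_compl_lt_iff {X S : Set α} (hS : S ⊆ X) (c : Ordinal) :
    (∃ B : Set α, otype Bᶜ < c ∧ S = X ∩ B) ↔ otype (X \ S) < c := by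
  constructor
  · rintro ⟨B, hB, rfl⟩
    exact (otype_mono fun x hx hxB => hx.2 ⟨hx.1, hxB⟩).trans_lt hB
  · intro h
    refine ⟨S ∪ Xᶜ, ?_, ?_⟩
    · rwa [Set.compl_union, compl_compl, Set.inter_comm, ← Set.sdiff_eq]
    · rw [Set.inter_union_distrib_left, Set.inter_compl_self, Set.union_empty,
        Set.inter_eq_right.2 hS]

end OrderType

theorem filter_restriction_iso_general
    (X : Set (Set.Iio (Ordinal.omega0 ^ Ordinal.omega0)))
    (Φ : X ≃o Set.Iio (Ordinal.omega0 ^ Ordinal.omega0)) :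
    ∀ A : Set X,
      (∃ B : Set (Set.Iio (Ordinal.omega0 ^ Ordinal.omega0)),
          otype Bᶜ < Ordinal.omega0 ^ Ordinal.omega0 ∧
            (Subtype.val '' A : Set (Set.Iio (Ordinal.omega0 ^ Ordinal.omega0))) = X ∩ B) ↔
        otype ((Φ '' A : Set (Set.Iio (Ordinal.omega0 ^ Ordinal.omega0)))ᶜ) <
          Ordinal.omega0 ^ Ordinal.omega0 := by
  intro A
  rw [exists_inter_eq_and_otype_compl_lt_iff (Subtype.coe_image_subset X A), ← Set.image_val_compl,
    ← Set.image_compl_eq Φ.bijective,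
    otype_image_lt_omega0_opow_omega0_iff (Subtype.strictMono_coe (· ∈ X)),
    otype_image_lt_omega0_opow_omega0_iff Φ.strictMono]

/-- Let `F` be the filter on `ω^ω` of all sets whose complement has order type `< ω^ω`.
If `X ⊆ ω^ω` is `F`-positive and `Φ : X → ω^ω` is an order isomorphism, then a set
`A ⊆ X` belongs to the restriction of `F` to `X` (i.e. `A = X ∩ B` for some `B ∈ F`)
iff `Φ(A) ∈ F`.  In particular, `F` is homogeneous. -/
theorem filter_restriction_iso
    (X : Set (Set.Iio (Ordinal.omega0 ^ Ordinal.omega0)))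
    (hX : ∀ A : Set (Set.Iio (Ordinal.omega0 ^ Ordinal.omega0)),
        otype Aᶜ < Ordinal.omega0 ^ Ordinal.omega0 → (X ∩ A).Nonempty)
    (Φ : X ≃o Set.Iio (Ordinal.omega0 ^ Ordinal.omega0)) :
    ∀ A : Set X,
      (∃ B : Set (Set.Iio (Ordinal.omega0 ^ Ordinal.omega0)),
          otype Bᶜ < Ordinal.omega0 ^ Ordinal.omega0 ∧
            (Subtype.val '' A : Set (Set.Iio (Ordinal.omega0 ^ Ordinal.omega0))) = X ∩ B) ↔
        otype ((Φ '' A : Set (Set.Iio (Ordinal.omega0 ^ Ordinal.omega0)))ᶜ) <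
          Ordinal.omega0 ^ Ordinal.omega0 :=
  filter_restriction_iso_general X Φ
end

section
/- Let A = {A_α : α < ω₁} be an independent family of subsets of ℕ generating a filter F, and suppose that for every F-positive X ⊆ ℕ there exists γ < ω₁ such that X ∩ L_ρ ≠ ∅ for all ρ ∈ Fn(ω₁ \ γ, 2), where L_ρ = ⋂_{α ∈ dom ρ} A_α^{ρ(α)}. Then for every F-positive X there exist δ < ω₁ and a finite-to-one function φ : δ → ℕ such that [⋂_{φ(α)<n} A_α \ ⋂_{φ(α)≤n} A_α] ∩ L_ρ ∩ X ≠ ∅ for all n < ω and all ρ ∈ Fn(ω₁ \ δ, 2). -/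
/-!
For every finite `H ⊆ ω₁` the set `X ∩ ⋂_{α ∈ H} A_α` is again positive, so the hypothesis gives
a `γ_H < ω₁` above which it meets every `L_ρ`. Closing off under `H ↦ γ_H` (a countable supremum
of iterates) yields one `γ < ω₁` with `γ_H ≤ γ` for all finite `H ⊆ γ`. Let `δ = γ + ω`, let `φ`
be injective on `γ` and send `γ + m` to `m`. Given `n` and `ρ` above `δ`, apply this to
`H = {α < γ | φ α < n}` and to `ρ` extended by `A_{γ+m}` for `m < n` and `ℕ \ A_{γ+n}`.
-/

/-- `A¹ = A`, `A⁰ = ℕ \ A`. -/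
def pw (A : Set ℕ) (b : Bool) : Set ℕ := if b then A else Aᶜ

/-- `L_ρ` for a finite partial function `ρ ∈ Fn(ω₁, 2)`, coded as a finite set `s` of
ordinals (the domain) together with `g : Ordinal → Bool` (the values). -/
def Lset (A : Ordinal → Set ℕ) (s : Finset Ordinal) (g : Ordinal → Bool) : Set ℕ :=
  ⋂ α ∈ s, pw (A α) (g α)

open Ordinal Set

universe u

theorem mem_pw {A : Set ℕ} {b : Bool} {x : ℕ} : x ∈ pw A b ↔ (x ∈ A ↔ b) := by
  cases b <;> simp [pw]

theorem mem_Lset {A : Ordinal → Set ℕ} {s : Finset Ordinal} {g : Ordinal → Bool} {x : ℕ} :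
    x ∈ Lset A s g ↔ ∀ α ∈ s, x ∈ pw (A α) (g α) := by
  simp [Lset]

theorem Lset_union (A : Ordinal → Set ℕ) (s t : Finset Ordinal) (g : Ordinal → Bool) :
    Lset A (s ∪ t) g = Lset A s g ∩ Lset A t g := by
  ext x
  simp only [mem_Lset, Finset.mem_union, or_imp, forall_and, mem_inter_iff]

theorem Lset_congr {A : Ordinal → Set ℕ} {s : Finset Ordinal} {g g' : Ordinal → Bool}
    (h : ∀ α ∈ s, g α = g' α) : Lset A s g = Lset A s g' :=
  iInter₂_congr fun α hα => by rw [h α hα]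

def IsPositive (A : Ordinal.{u} → Set ℕ) (S : Set Ordinal.{u}) (X : Set ℕ) : Prop :=
  ∀ H : Finset Ordinal, ↑H ⊆ S → (X ∩ ⋂ α ∈ H, A α).Nonempty

theorem IsPositive.inter_biInter {A : Ordinal.{u} → Set ℕ} {S : Set Ordinal.{u}} {X : Set ℕ}
    (hX : IsPositive A S X) {H : Finset Ordinal} (hH : ↑H ⊆ S) :
    IsPositive A S (X ∩ ⋂ α ∈ H, A α) := by
  intro H' hH'
  obtain ⟨x, hxX, hx⟩ := hX (H ∪ H') (by rw [Finset.coe_union]; exact union_subset hH hH')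
  simp only [mem_iInter₂, Finset.mem_union, or_imp, forall_and] at hx
  exact ⟨x, ⟨hxX, mem_iInter₂.2 hx.1⟩, mem_iInter₂.2 hx.2⟩

theorem countable_Iio_of_lt_omega_one {β : Ordinal.{u}} (hβ : β < ω₁) : (Iio β).Countable := by
  rw [← Cardinal.le_aleph0_iff_set_countable, Cardinal.mk_Iio_ordinal, Cardinal.lift_le_aleph0,
    ← Cardinal.lt_aleph_one_iff]
  exact Cardinal.lt_omega_iff_card_lt.1 hβ

theorem countable_setOf_finset_subset_Iio {β : Ordinal.{u}} (hβ : β < ω₁) :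
    {H : Finset Ordinal.{u} | ↑H ⊆ Iio β}.Countable :=
  ((countable_ofPred_finite_subset (countable_Iio_of_lt_omega_one hβ)).preimage
    Finset.coe_injective).mono fun H hH =>
      show (H : Set Ordinal).Finite ∧ _ from ⟨H.finite_toSet, hH⟩

theorem exists_lt_omega_one_forall_finset_subset_Iio
    {P : Finset Ordinal.{u} → Ordinal.{u} → Prop}
    (hP : ∀ H γ γ', γ ≤ γ' → P H γ → P H γ')
    (h : ∀ H : Finset Ordinal, ↑H ⊆ Iio ω₁ → ∃ γ < ω₁, P H γ) :
    ∃ γ < ω₁, ∀ H : Finset Ordinal, ↑H ⊆ Iio γ → P H γ := by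
  choose! Γ hΓω hΓP using h
  let F : Ordinal.{u} → Ordinal.{u} := fun β => ⨆ H : {H : Finset Ordinal | ↑H ⊆ Iio β}, Γ H
  have hF : ∀ β < ω₁, F β < ω₁ := fun β hβ =>
    have := (countable_setOf_finset_subset_Iio hβ).to_subtype
    iSup_lt_omega_one fun H => hΓω H (H.2.trans (Iio_subset_Iio hβ.le))
  have hγ : nfp F 0 < ω₁ := nfp_lt_ord (by simp) hF (omega_pos 1)
  refine ⟨nfp F 0, hγ, fun H hH => ?_⟩
  obtain ⟨n, hn⟩ : ∃ n, ↑H ⊆ Iio (F^[n] 0) := by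
    rcases H.eq_empty_or_nonempty with rfl | hne
    · exact ⟨0, by simp⟩
    · obtain ⟨n, hn⟩ := lt_nfp_iff.1 (hH (H.max'_mem hne))
      exact ⟨n, fun α hα => (H.le_max' α hα).trans_lt hn⟩
  have hnω : F^[n] 0 < ω₁ := (iterate_le_nfp F 0 n).trans_lt hγ
  refine hP H _ _ ?_ (hΓP H (hH.trans (Iio_subset_Iio hγ.le)))
  calc Γ H ≤ F (F^[n] 0) :=
        le_ciSup (f := fun H : {H : Finset Ordinal | ↑H ⊆ Iio (F^[n] 0)} => Γ H)
          ⟨ω₁, by rintro _ ⟨H', rfl⟩; exact (hΓω H' (H'.2.trans (Iio_subset_Iio hnω.le))).le⟩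
          ⟨H, hn⟩
    _ = F^[n + 1] 0 := (Function.iterate_succ_apply' F n 0).symm
    _ ≤ nfp F 0 := iterate_le_nfp F 0 (n + 1)

theorem exists_finiteToOne_add_omega0 {γ : Ordinal.{u}} (hγ : (Iio γ).Countable) :
    ∃ φ : Ordinal.{u} → ℕ, (∀ k, {α | α < γ + ω ∧ φ α = k}.Finite) ∧
      ∀ α, γ ≤ α → α < γ + ω → γ + φ α = α := by
  obtain ⟨e, he⟩ := countable_iff_exists_injOn.1 hγ
  let ladder : ℕ → Ordinal.{u} := fun m => γ + m
  have hladder : ∀ α, γ ≤ α → α < γ + ω → γ + Function.invFun ladder α = α := by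
    intro α h₁ h₂
    obtain ⟨m, hm⟩ := lt_omega0.1 (sub_lt_of_lt_add h₂ omega0_pos)
    exact Function.invFun_eq (f := ladder)
      ⟨m, by simp only [ladder, ← hm, Ordinal.add_sub_cancel_of_le h₁]⟩
  let φ : Ordinal.{u} → ℕ := fun α => if α < γ then e α else Function.invFun ladder α
  have hφ : ∀ α, γ ≤ α → α < γ + ω → γ + φ α = α := fun α h₁ h₂ => by
    simpa [φ, not_lt.2 h₁] using hladder α h₁ h₂
  refine ⟨φ, fun k => ?_, hφ⟩
  have hlow : {α | α < γ ∧ e α = k}.Subsingleton := by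
    rintro a ⟨ha, rfl⟩ b ⟨hb, hab⟩
    exact he ha hb hab.symm
  refine (hlow.finite.union (finite_singleton (γ + k))).subset ?_
  rintro α ⟨hαω, rfl⟩
  by_cases hαγ : α < γ
  · exact Or.inl ⟨hαγ, by simp [φ, hαγ]⟩
  · exact Or.inr (hφ α (not_lt.1 hαγ) hαω).symm

theorem nonempty_diff_inter_Lset_inter {A : Ordinal.{u} → Set ℕ} {X : Set ℕ} {γ κ : Ordinal.{u}}
    {φ : Ordinal.{u} → ℕ} (hκ : γ + ω ≤ κ)
    (hX : ∀ H : Finset Ordinal, ↑H ⊆ Iio γ → ∀ (s : Finset Ordinal) (g : Ordinal → Bool),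
      ↑s ⊆ Ico γ κ → ((X ∩ ⋂ α ∈ H, A α) ∩ Lset A s g).Nonempty)
    (hφfin : ∀ k, {α | α < γ + ω ∧ φ α = k}.Finite)
    (hφ : ∀ α, γ ≤ α → α < γ + ω → γ + φ α = α)
    (n : ℕ) (s : Finset Ordinal) (g : Ordinal → Bool) (hs : ↑s ⊆ Ico (γ + ω) κ) :
    (((⋂ α ∈ {α | α < γ + ω ∧ φ α < n}, A α) \ ⋂ α ∈ {α | α < γ + ω ∧ φ α ≤ n}, A α) ∩
      Lset A s g ∩ X).Nonempty := by
  have hγω : ∀ m : ℕ, γ + m < γ + ω := fun m => add_lt_add_right (natCast_lt_omega0 m) γ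
  have hφladder : ∀ m : ℕ, φ (γ + m) = m := fun m => by
    exact_mod_cast add_left_cancel (hφ _ le_self_add (hγω m))
  have hHfin : {α | α < γ ∧ φ α < n}.Finite :=
    ((finite_Iio n).biUnion fun k _ => hφfin k).subset fun α ⟨hαγ, hαn⟩ =>
      mem_biUnion (mem_Iio.2 hαn) ⟨hαγ.trans_le le_self_add, rfl⟩
  let ladder : Finset Ordinal := (Finset.range (n + 1)).image fun m : ℕ => γ + m
  let g' : Ordinal → Bool := fun α => if α < γ + ω then decide (φ α < n) else g α
  have hsub : ↑(s ∪ ladder) ⊆ Ico γ κ := by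
    rw [Finset.coe_union]
    refine union_subset (fun α hα => ⟨le_self_add.trans (hs hα).1, (hs hα).2⟩) ?_
    intro α hα
    obtain ⟨m, -, rfl⟩ := Finset.mem_image.1 hα
    exact ⟨le_self_add, (hγω m).trans_le hκ⟩
  obtain ⟨x, ⟨hxX, hxH⟩, hxL⟩ :=
    hX hHfin.toFinset (fun α hα => (hHfin.mem_toFinset.1 hα).1) _ g' hsub
  rw [Lset_union, Lset_congr (g' := g) fun α hα => if_neg (not_lt.2 (hs hα).1)] at hxL
  have hxladder : ∀ m ≤ n, (x ∈ A (γ + m) ↔ m < n) := fun m hm => by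
    have := mem_pw.1 (mem_Lset.1 hxL.2 (γ + m)
      (Finset.mem_image.2 ⟨m, Finset.mem_range.2 (Nat.lt_succ_of_le hm), rfl⟩))
    simpa [g', hγω m, hφladder m] using this
  refine ⟨x, ⟨⟨mem_iInter₂.2 fun α ⟨hαω, hαn⟩ => ?_, fun hx => ?_⟩, hxL.1⟩, hxX⟩
  · by_cases hαγ : α < γ
    · exact mem_iInter₂.1 hxH α (hHfin.mem_toFinset.2 ⟨hαγ, hαn⟩)
    · rw [← hφ α (not_lt.1 hαγ) hαω]
      exact (hxladder _ hαn.le).2 hαn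
  · have := mem_iInter₂.1 hx (γ + n) ⟨hγω n, (hφladder n).le⟩
    exact lt_irrefl n ((hxladder n le_rfl).1 this)

theorem eventually_independent_finiteToOne_general
    (A : Ordinal → Set ℕ)
    (hyp : ∀ X : Set ℕ,
      (∀ H : Finset Ordinal, ↑H ⊆ Set.Iio (Cardinal.aleph 1).ord →
        (X ∩ ⋂ α ∈ H, A α).Nonempty) →
      ∃ γ < (Cardinal.aleph 1).ord, ∀ (s : Finset Ordinal) (g : Ordinal → Bool),
        ↑s ⊆ Set.Ico γ (Cardinal.aleph 1).ord → (X ∩ Lset A s g).Nonempty) :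
    ∀ X : Set ℕ,
      (∀ H : Finset Ordinal, ↑H ⊆ Set.Iio (Cardinal.aleph 1).ord →
        (X ∩ ⋂ α ∈ H, A α).Nonempty) →
      ∃ δ < (Cardinal.aleph 1).ord, ∃ φ : Ordinal → ℕ,
        (∀ k : ℕ, {α : Ordinal | α < δ ∧ φ α = k}.Finite) ∧
        ∀ (n : ℕ) (s : Finset Ordinal) (g : Ordinal → Bool),
          ↑s ⊆ Set.Ico δ (Cardinal.aleph 1).ord →
          (((⋂ α ∈ {α : Ordinal | α < δ ∧ φ α < n}, A α) \
              ⋂ α ∈ {α : Ordinal | α < δ ∧ φ α ≤ n}, A α) ∩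
            Lset A s g ∩ X).Nonempty := by
  intro X hX
  rw [Cardinal.ord_aleph] at hyp hX ⊢
  obtain ⟨γ, hγ, hγX⟩ := exists_lt_omega_one_forall_finset_subset_Iio
    (P := fun H γ => ∀ (s : Finset Ordinal) g, ↑s ⊆ Ico γ ω₁ →
      ((X ∩ ⋂ α ∈ H, A α) ∩ Lset A s g).Nonempty)
    (fun _ _ _ hle h s g hs => h s g (hs.trans (Ico_subset_Ico_left hle)))
    (fun _ hH => hyp _ (IsPositive.inter_biInter hX hH))
  obtain ⟨φ, hφfin, hφ⟩ := exists_finiteToOne_add_omega0 (countable_Iio_of_lt_omega_one hγ)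
  have hγω : γ + ω < ω₁ := isPrincipal_add_omega 1 hγ omega0_lt_omega_one
  exact ⟨γ + ω, hγω, φ, hφfin, nonempty_diff_inter_Lset_inter hγω.le hγX hφfin hφ⟩

/-- Lemma 4.2: let `{A_α : α < ω₁}` be an independent family of subsets of `ℕ`
generating a filter `F`.  Suppose that for every `F`-positive `X` there is `γ < ω₁` with
`X ∩ L_ρ ≠ ∅` for all `ρ ∈ Fn(ω₁ \ γ, 2)`.  Then for every `F`-positive `X` there are
`δ < ω₁` and a finite-to-one `φ : δ → ℕ` such that
`[⋂_{φ(α)<n} A_α \ ⋂_{φ(α)≤n} A_α] ∩ L_ρ ∩ X ≠ ∅` for all `n < ω` and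
`ρ ∈ Fn(ω₁ \ δ, 2)`. -/
theorem eventually_independent_finiteToOne
    (A : Ordinal → Set ℕ)
    (hind : ∀ H K : Finset Ordinal, ↑H ⊆ Set.Iio (Cardinal.aleph 1).ord →
      ↑K ⊆ Set.Iio (Cardinal.aleph 1).ord → Disjoint H K →
      ((⋂ α ∈ H, A α) ∩ ⋂ β ∈ K, (A β)ᶜ).Infinite)
    (hyp : ∀ X : Set ℕ,
      (∀ H : Finset Ordinal, ↑H ⊆ Set.Iio (Cardinal.aleph 1).ord →
        (X ∩ ⋂ α ∈ H, A α).Nonempty) →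
      ∃ γ < (Cardinal.aleph 1).ord, ∀ (s : Finset Ordinal) (g : Ordinal → Bool),
        ↑s ⊆ Set.Ico γ (Cardinal.aleph 1).ord → (X ∩ Lset A s g).Nonempty) :
    ∀ X : Set ℕ,
      (∀ H : Finset Ordinal, ↑H ⊆ Set.Iio (Cardinal.aleph 1).ord →
        (X ∩ ⋂ α ∈ H, A α).Nonempty) →
      ∃ δ < (Cardinal.aleph 1).ord, ∃ φ : Ordinal → ℕ,
        (∀ k : ℕ, {α : Ordinal | α < δ ∧ φ α = k}.Finite) ∧
        ∀ (n : ℕ) (s : Finset Ordinal) (g : Ordinal → Bool),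
          ↑s ⊆ Set.Ico δ (Cardinal.aleph 1).ord →
          (((⋂ α ∈ {α : Ordinal | α < δ ∧ φ α < n}, A α) \
              ⋂ α ∈ {α : Ordinal | α < δ ∧ φ α ≤ n}, A α) ∩
            Lset A s g ∩ X).Nonempty :=
  eventually_independent_finiteToOne_general A hyp
end

section
/- Let F be a filter on ℕ and let T₃' be the space with underlying set (ℕ × (ℕ ∪ {ω})) ∪ {∞}, where points of ℕ × ℕ are isolated, each ⟨n, ω⟩ has neighborhood base {n} × (F₀ ∪ {ω}) for F₀ ∈ F, and a neighborhood of ∞ consists of ∞ together with neighborhoods of ⟨n, ω⟩ for all n in some member of F. If F is not an ultrafilter, then there exists a subspace X of T₃' of Cantor–Bendixson rank 3 that is not homeomorphic to T₃'; hence T₃' is not 3-Toronto. -/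
/-- The underlying set of the space `T₃' = (ℕ × (ℕ ∪ {ω})) ∪ {∞}`:
`none` is `∞`, `some (n, none)` is `⟨n, ω⟩`, and `some (n, some m)` is `⟨n, m⟩`. -/
def T3Carrier : Type := Option (ℕ × Option ℕ)

/-- The topology of `T₃'`: points `⟨n, m⟩` of `ℕ × ℕ` are isolated, `⟨n, ω⟩` has
neighborhood base `{n} × (F₀ ∪ {ω})` for `F₀ ∈ F`, and a neighborhood of `∞` consists of
`∞` together with neighborhoods of `⟨n, ω⟩` for all `n` in some member of `F`. -/
def t3Top (F : Filter ℕ) : TopologicalSpace T3Carrier where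
  IsOpen U :=
    (∀ n : ℕ, Option.some (n, Option.none) ∈ U →
      ∃ F₁ ∈ F, ∀ m ∈ F₁, Option.some (n, Option.some m) ∈ U) ∧
    (Option.none ∈ U → ∃ F₀ ∈ F, ∀ n ∈ F₀, Option.some (n, Option.none) ∈ U)
  isOpen_univ := ⟨fun _ _ => ⟨Set.univ, Filter.univ_mem, fun _ _ => trivial⟩,
    fun _ => ⟨Set.univ, Filter.univ_mem, fun _ _ => trivial⟩⟩
  isOpen_inter := by
    rintro U V ⟨hU1, hU2⟩ ⟨hV1, hV2⟩
    constructor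
    · intro n hn
      obtain ⟨F₁, h₁, g₁⟩ := hU1 n hn.1
      obtain ⟨F₂, h₂, g₂⟩ := hV1 n hn.2
      exact ⟨F₁ ∩ F₂, Filter.inter_mem h₁ h₂, fun m hm => ⟨g₁ m hm.1, g₂ m hm.2⟩⟩
    · intro hn
      obtain ⟨F₁, h₁, g₁⟩ := hU2 hn.1
      obtain ⟨F₂, h₂, g₂⟩ := hV2 hn.2
      exact ⟨F₁ ∩ F₂, Filter.inter_mem h₁ h₂, fun n hn' => ⟨g₁ n hn'.1, g₂ n hn'.2⟩⟩
  isOpen_sUnion := by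
    intro S hS
    constructor
    · intro n hn
      obtain ⟨U, hU, hnU⟩ := hn
      obtain ⟨F₁, h₁, g₁⟩ := (hS U hU).1 n hnU
      exact ⟨F₁, h₁, fun m hm => ⟨U, hU, g₁ m hm⟩⟩
    · intro hn
      obtain ⟨U, hU, hnU⟩ := hn
      obtain ⟨F₀, h₀, g₀⟩ := (hS U hU).2 hnU
      exact ⟨F₀, h₀, fun n hn' => ⟨U, hU, g₀ n hn'⟩⟩

/-- The `α`-th Cantor–Bendixson derivative of a space: `X⁰ = X`, `X^{α+1}` is the set of
non-isolated points of `X^α`, with intersections at limits.  Equivalently (since the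
derivatives are decreasing), `X^α = ⋂_{β<α} D(X^β)` where `D(S)` is the set of points of
`S` that lie in the closure of `S` minus themselves. -/
noncomputable def cbDeriv (X : Type*) [TopologicalSpace X] : Ordinal → Set X :=
  Ordinal.lt_wf.fix (C := fun _ => Set X) fun α ih =>
    ⋂ β : {β // β < α}, {x | x ∈ ih β.1 β.2 ∧ x ∈ closure (ih β.1 β.2 \ {x})}

/-- `X` is scattered of Cantor–Bendixson rank exactly `α`. -/
def HasCBRank (X : Type*) [TopologicalSpace X] (α : Ordinal) : Prop :=
  cbDeriv X α = ∅ ∧ ∀ β < α, cbDeriv X β ≠ ∅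


/-!
Let `A` witness that `F` is not an ultrafilter, so that both `A` and `Aᶜ` meet every member
of `F`, and let `X` be `T₃'` with the points `⟨n, ω⟩`, `n ∉ A`, removed. The derived sets of
`X` are `{∞} ∪ {⟨n, ω⟩ : n ∈ A}` and `{∞}`, so `X` has rank 3. In `X`, the closed set
`{∞} ∪ {⟨n, m⟩ : n ∉ A}` meets the first derived set only in `∞`, yet accumulates at `∞`.
In `T₃'` this is impossible: a closed set containing no `⟨n, ω⟩` stays closed after removing
`∞`. Homeomorphisms preserve derived sets, hence they would carry one picture to the other.
-/

open Set Filter Topology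

section CantorBendixson

variable {X Y : Type*} [TopologicalSpace X] [TopologicalSpace Y]

def nonisolatedPoints (S : Set X) : Set X :=
  {x | x ∈ S ∧ x ∈ closure (S \ {x})}

lemma nonisolatedPoints_mono {S T : Set X} (h : S ⊆ T) :
    nonisolatedPoints S ⊆ nonisolatedPoints T :=
  fun _ hx => ⟨h hx.1, closure_mono (sdiff_subset_sdiff_left h) hx.2⟩

@[simp]
lemma nonisolatedPoints_singleton (x : X) : nonisolatedPoints {x} = ∅ := by
  refine eq_empty_iff_forall_notMem.2 ?_
  rintro _ ⟨rfl, hx⟩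
  simp at hx

lemma notMem_nonisolatedPoints_of_isOpen {S U : Set X} {x : X} (hU : IsOpen U) (hxU : x ∈ U)
    (hSU : S ∩ U ⊆ {x}) : x ∉ nonisolatedPoints S := by
  rintro ⟨-, hx⟩
  obtain ⟨y, hyU, hyS, hyx⟩ := mem_closure_iff.1 hx U hU hxU
  exact hyx (hSU ⟨hyS, hyU⟩)

lemma Topology.IsEmbedding.image_nonisolatedPoints {f : X → Y} (hf : IsEmbedding f)
    (S : Set X) : f '' nonisolatedPoints S = nonisolatedPoints (f '' S) := by
  ext y
  simp only [nonisolatedPoints, mem_image, mem_ofPred_eq, hf.closure_eq_preimage_closure_image,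
    mem_preimage, image_sdiff hf.injective, image_singleton]
  constructor
  · rintro ⟨x, ⟨hxS, hx⟩, rfl⟩
    exact ⟨⟨x, hxS, rfl⟩, hx⟩
  · rintro ⟨⟨x, hxS, rfl⟩, hx⟩
    exact ⟨x, ⟨hxS, hx⟩, rfl⟩

lemma cbDeriv_eq_iInter (α : Ordinal) :
    cbDeriv X α = ⋂ β : {β // β < α}, nonisolatedPoints (cbDeriv X β.1) := by
  rw [cbDeriv, Ordinal.lt_wf.fix_eq]
  rfl

lemma cbDeriv_antitone : Antitone (cbDeriv X) := by
  intro α γ h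
  rw [cbDeriv_eq_iInter α, cbDeriv_eq_iInter γ]
  exact iInter_mono' fun β => ⟨⟨β.1, β.2.trans_le h⟩, subset_rfl⟩

@[simp]
lemma cbDeriv_zero : cbDeriv X 0 = univ := by
  simp [cbDeriv_eq_iInter 0]

lemma cbDeriv_add_one (α : Ordinal) : cbDeriv X (α + 1) = nonisolatedPoints (cbDeriv X α) := by
  rw [cbDeriv_eq_iInter]
  refine subset_antisymm (iInter_subset_of_subset ⟨α, lt_add_one α⟩ subset_rfl) ?_
  exact subset_iInter fun β =>
    nonisolatedPoints_mono (cbDeriv_antitone (Order.lt_add_one_iff.1 β.2))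

lemma hasCBRank_add_one {α : Ordinal} (hempty : cbDeriv X (α + 1) = ∅)
    (hne : (cbDeriv X α).Nonempty) : HasCBRank X (α + 1) :=
  ⟨hempty, fun _ hβ => (hne.mono (cbDeriv_antitone (Order.lt_add_one_iff.1 hβ))).ne_empty⟩

lemma Topology.IsEmbedding.image_cbDeriv_add_one {f : X → Y} (hf : IsEmbedding f) (α : Ordinal) :
    f '' cbDeriv X (α + 1) = nonisolatedPoints (f '' cbDeriv X α) := by
  rw [cbDeriv_add_one, hf.image_nonisolatedPoints]

end CantorBendixson

def T3' (_F : Filter ℕ) : Type := T3Carrier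

namespace T3'

variable {F : Filter ℕ}

instance : TopologicalSpace (T3' F) := t3Top F

abbrev infty : T3' F := (none : T3Carrier)

abbrev omega (n : ℕ) : T3' F := (some (n, none) : T3Carrier)

abbrev pt (n m : ℕ) : T3' F := (some (n, some m) : T3Carrier)

@[simp] lemma omega_ne_infty (n : ℕ) : (omega n : T3' F) ≠ infty := nofun
@[simp] lemma pt_ne_infty (n m : ℕ) : (pt n m : T3' F) ≠ infty := nofun
@[simp] lemma omega_ne_pt (n k m : ℕ) : (omega n : T3' F) ≠ pt k m := nofun
@[simp] lemma pt_ne_omega (n k m : ℕ) : (pt n m : T3' F) ≠ omega k := nofun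

@[simp] lemma omega_inj {n k : ℕ} : (omega n : T3' F) = omega k ↔ n = k :=
  Option.some_inj.trans (by simp)

@[simp] lemma pt_inj {n m k l : ℕ} : (pt n m : T3' F) = pt k l ↔ n = k ∧ m = l :=
  Option.some_inj.trans (by simp)

@[elab_as_elim, induction_eliminator]
lemma induction {motive : T3' F → Prop} (infty : motive infty) (omega : ∀ n, motive (omega n))
    (pt : ∀ n m, motive (pt n m)) (x : T3' F) : motive x := by
  obtain _ | ⟨n, _ | m⟩ := x
  exacts [infty, omega n, pt n m]

def column (n : ℕ) : Set (T3' F) := insert (omega n) (range (pt n))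

lemma isOpen_iff {U : Set (T3' F)} :
    IsOpen U ↔ (∀ n, omega n ∈ U → ∀ᶠ m in F, pt n m ∈ U) ∧
      (infty ∈ U → ∀ᶠ n in F, omega n ∈ U) := by
  simp only [eventually_iff_exists_mem]
  rfl

lemma isOpen_singleton_pt (n m : ℕ) : IsOpen ({pt n m} : Set (T3' F)) :=
  isOpen_iff.2 ⟨by simp, by simp⟩

lemma isOpen_column (n : ℕ) : IsOpen (column n : Set (T3' F)) :=
  isOpen_iff.2 ⟨by simp [column], by simp [column]⟩

lemma omega_mem_closure {S : Set (T3' F)} {n : ℕ} (h : ∃ᶠ m in F, pt n m ∈ S) :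
    omega n ∈ closure S :=
  mem_closure_iff.2 fun _ hU hn =>
    let ⟨m, hm⟩ := (((isOpen_iff.1 hU).1 n hn).and_frequently h).exists
    ⟨pt n m, hm⟩

lemma infty_mem_closure {S : Set (T3' F)} (h : ∃ᶠ n in F, omega n ∈ closure S) :
    infty ∈ closure S := by
  refine mem_closure_iff.2 fun U hU hinf => ?_
  obtain ⟨n, hnU, hn⟩ := ((isOpen_iff.1 hU).2 hinf |>.and_frequently h).exists
  exact mem_closure_iff.1 hn U hU hnU

lemma isClosed_diff_infty {C : Set (T3' F)} (hC : IsClosed C) (hω : ∀ n, omega n ∉ C) :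
    IsClosed (C \ {infty}) := by
  refine isOpen_compl_iff.1 (isOpen_iff.2 ⟨fun n _ => ?_, fun _ => ?_⟩)
  · exact ((isOpen_iff.1 hC.isOpen_compl).1 n (hω n)).mono fun m hm h => hm h.1
  · exact Eventually.of_forall fun n h => hω n h.1

def withOmegas (A : Set ℕ) : Set (T3' F) := (omega '' Aᶜ)ᶜ

@[simp] lemma infty_mem_withOmegas {A : Set ℕ} : (infty : T3' F) ∈ withOmegas A := by
  simp [withOmegas]

@[simp] lemma omega_mem_withOmegas {A : Set ℕ} {n : ℕ} :
    (omega n : T3' F) ∈ withOmegas A ↔ n ∈ A := by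
  simp [withOmegas]

@[simp] lemma pt_mem_withOmegas {A : Set ℕ} {n m : ℕ} : (pt n m : T3' F) ∈ withOmegas A := by
  simp [withOmegas]

lemma nonisolatedPoints_withOmegas {A : Set ℕ} (hA : ∃ᶠ n in F, n ∈ A) :
    nonisolatedPoints (withOmegas A : Set (T3' F)) = insert infty (omega '' A) := by
  ext x
  induction x with
  | infty =>
    refine iff_of_true ⟨infty_mem_withOmegas, ?_⟩ (mem_insert _ _)
    exact infty_mem_closure (hA.mono fun n hn => subset_closure (by simpa using hn))
  | omega n =>
    simp only [mem_insert_iff, omega_ne_infty, mem_image, omega_inj, false_or, exists_eq_right]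
    refine ⟨fun h => omega_mem_withOmegas.1 h.1, fun hn => ⟨omega_mem_withOmegas.2 hn, ?_⟩⟩
    have : F.NeBot := (frequently_true_iff_neBot F).1 (hA.mono fun _ _ => trivial)
    exact omega_mem_closure (Frequently.of_forall fun m => by simp)
  | pt n m =>
    simp only [mem_insert_iff, pt_ne_infty, mem_image, omega_ne_pt, and_false, exists_false,
      or_false, iff_false]
    exact notMem_nonisolatedPoints_of_isOpen (isOpen_singleton_pt n m) rfl inter_subset_right

lemma nonisolatedPoints_insert_infty_image_omega {A : Set ℕ} (hA : ∃ᶠ n in F, n ∈ A) :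
    nonisolatedPoints (insert infty (omega '' A) : Set (T3' F)) = {infty} := by
  ext x
  induction x with
  | infty =>
    refine iff_of_true ⟨mem_insert _ _, ?_⟩ rfl
    exact infty_mem_closure (hA.mono fun n hn => subset_closure (by simpa using hn))
  | omega n =>
    refine iff_of_false (notMem_nonisolatedPoints_of_isOpen (isOpen_column n) (mem_insert _ _) ?_)
      (by simp)
    rintro _ ⟨hx | ⟨k, -, rfl⟩, hxn⟩
    · simp [hx, column] at hxn
    · simpa [column] using hxn
  | pt n m =>
    exact iff_of_false (fun h => by simpa using h.1) (by simp)

lemma nonisolatedPoints_univ [F.NeBot] :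
    nonisolatedPoints (univ : Set (T3' F)) = insert infty (omega '' univ) := by
  simpa [withOmegas] using nonisolatedPoints_withOmegas (F := F) (.of_forall fun _ => mem_univ _)

lemma nonisolatedPoints_nonisolatedPoints_univ [F.NeBot] :
    nonisolatedPoints (nonisolatedPoints (univ : Set (T3' F))) = {infty} := by
  rw [nonisolatedPoints_univ, nonisolatedPoints_insert_infty_image_omega]
  exact .of_forall fun _ => mem_univ _

theorem not_isEmbedding_of_range_eq_withOmegas {A : Set ℕ} (hA : ∃ᶠ n in F, n ∈ A)
    (hAc : ∃ᶠ n in F, n ∉ A) {g : T3' F → T3' F} (hg : IsEmbedding g)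
    (hrange : range g = withOmegas A) : False := by
  have : F.NeBot := (frequently_true_iff_neBot F).1 (hA.mono fun _ _ => trivial)
  have hD1 : g '' nonisolatedPoints univ = insert infty (omega '' A) := by
    rw [hg.image_nonisolatedPoints, image_univ, hrange, nonisolatedPoints_withOmegas hA]
  have hg_infty : g infty = infty := by
    have hD2 := hg.image_nonisolatedPoints (nonisolatedPoints univ)
    rw [hD1, nonisolatedPoints_insert_infty_image_omega hA,
      nonisolatedPoints_nonisolatedPoints_univ, image_singleton] at hD2
    exact singleton_eq_singleton_iff.1 hD2
  have hg_omega (n : ℕ) : g (omega n) ∈ omega '' A := by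
    have hn : g (omega n) ∈ insert infty (omega '' A) :=
      hD1 ▸ mem_image_of_mem g (by simp [nonisolatedPoints_univ])
    refine (mem_insert_iff.1 hn).resolve_left fun h => ?_
    exact omega_ne_infty n (hg.injective (h.trans hg_infty.symm))
  -- `K ∩ withOmegas A = {∞} ∪ {⟨n, m⟩ : n ∉ A}`
  set K : Set (T3' F) := (⋃ n ∈ A, column n)ᶜ
  have hK : IsClosed (g ⁻¹' K) :=
    (isOpen_biUnion fun n _ => isOpen_column n).isClosed_compl.preimage hg.continuous
  have hKω (n : ℕ) : omega n ∉ g ⁻¹' K := by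
    obtain ⟨k, hk, he⟩ := hg_omega n
    simpa [K, ← he, column] using hk
  refine (isClosed_diff_infty hK hKω).closure_subset ?_ |>.2 rfl
  rw [hg.closure_eq_preimage_closure_image, mem_preimage, hg_infty]
  refine infty_mem_closure (hAc.mono fun n hn => omega_mem_closure (.of_forall fun m => ?_))
  obtain ⟨y, hy⟩ : pt n m ∈ range g := hrange ▸ pt_mem_withOmegas
  refine ⟨y, ⟨?_, ?_⟩, hy⟩
  · simpa [K, hy, column] using fun i hi (h : i = n) => hn (h ▸ hi)
  · rintro rfl
    simp [hg_infty] at hy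

theorem hasCBRank_withOmegas {A : Set ℕ} (hA : ∃ᶠ n in F, n ∈ A) :
    HasCBRank (withOmegas A : Set (T3' F)) 3 := by
  have hf := IsEmbedding.subtypeVal (p := (· ∈ (withOmegas A : Set (T3' F))))
  have h1 : Subtype.val '' cbDeriv (withOmegas A : Set (T3' F)) 1 =
      insert infty (omega '' A) := by
    rw [← zero_add 1, hf.image_cbDeriv_add_one, cbDeriv_zero, image_univ, Subtype.range_coe,
      nonisolatedPoints_withOmegas hA]
  have h2 : Subtype.val '' cbDeriv (withOmegas A : Set (T3' F)) 2 = {infty} := by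
    rw [← one_add_one_eq_two, hf.image_cbDeriv_add_one, h1,
      nonisolatedPoints_insert_infty_image_omega hA]
  rw [← two_add_one_eq_three]
  refine hasCBRank_add_one ?_ (image_nonempty.1 (h2 ▸ singleton_nonempty _))
  rw [← image_eq_empty (f := Subtype.val), hf.image_cbDeriv_add_one, h2,
    nonisolatedPoints_singleton]

end T3'

/-- If `F` is not an ultrafilter, then `T₃'` has a subspace of Cantor–Bendixson rank 3
which is not homeomorphic to `T₃'`; hence `T₃'` is not 3-Toronto. -/
theorem t3'_not_three_toronto (F : Filter ℕ)
    (hF : ¬ ∀ A : Set ℕ, A ∈ F ∨ Aᶜ ∈ F) :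
    letI : TopologicalSpace T3Carrier := t3Top F
    ∃ X : Set T3Carrier, HasCBRank X 3 ∧ ¬ Nonempty (X ≃ₜ T3Carrier) := by
  push Not at hF
  obtain ⟨A, hA, hAc⟩ := hF
  show ∃ X : Set (T3' F), HasCBRank X 3 ∧ ¬Nonempty (X ≃ₜ T3' F)
  refine ⟨T3'.withOmegas A, T3'.hasCBRank_withOmegas hAc, fun ⟨e⟩ => ?_⟩
  exact T3'.not_isEmbedding_of_range_eq_withOmegas hAc (not_eventually.1 hA)
    (IsEmbedding.subtypeVal.comp e.symm.isEmbedding) (by simp [range_comp])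
end

section
/- Let F be a filter on ℕ which is homogeneous, isomorphic to F × ℕ, and not the cofinite filter, and let T_α be the associated scattered spaces (T₀ = ∅, T₁ a point, T_{α+1} = ({n} × T_α)ₙ ∪_F {∞}, T_α = ⊕_{β<α} T_β for limit α). Then for every ordinal α, T_α is homeomorphic to the topological sum of T_α with ⊕_{n∈ℕ} X_n, whenever each X_n is homeomorphic to some T_{β_n} with β_n < α. -/
/-- The topology of the space `(Xᵢ)ᵢ ∪_G {∞}`: each fiber `Xᵢ` is clopen with its own
topology (`some ⟨i, x⟩` is the point `x` of `Xᵢ`), and a set containing the extra point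
`∞ = none` is open iff it contains all fibers indexed by some member of the filter `G`. -/
def fSum {I : Type*} (G : Filter I) (X : I → Type*) [∀ i, TopologicalSpace (X i)] :
    TopologicalSpace (Option (Σ i, X i)) where
  IsOpen U := (∀ i, IsOpen {x : X i | Option.some ⟨i, x⟩ ∈ U}) ∧
    (Option.none ∈ U → ∃ F₀ ∈ G, ∀ i ∈ F₀, ∀ x : X i, Option.some ⟨i, x⟩ ∈ U)
  isOpen_univ := ⟨fun _ => isOpen_univ, fun _ => ⟨Set.univ, Filter.univ_mem, by simp⟩⟩
  isOpen_inter := by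
    rintro U V ⟨hU1, hU2⟩ ⟨hV1, hV2⟩
    refine ⟨fun i => (hU1 i).inter (hV1 i), fun h => ?_⟩
    obtain ⟨F₀, hF₀, h1⟩ := hU2 h.1
    obtain ⟨F₁, hF₁, h2⟩ := hV2 h.2
    exact ⟨F₀ ∩ F₁, Filter.inter_mem hF₀ hF₁, fun i hi x => ⟨h1 i hi.1 x, h2 i hi.2 x⟩⟩
  isOpen_sUnion := by
    intro S hS
    refine ⟨fun i => ?_, fun h => ?_⟩
    · have : {x : X i | Option.some ⟨i, x⟩ ∈ ⋃₀ S} =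
        ⋃ U ∈ S, {x : X i | Option.some ⟨i, x⟩ ∈ U} := by
        ext x; simp [Set.mem_sUnion]
      rw [this]
      exact isOpen_biUnion fun U hU => (hS U hU).1 i
    · obtain ⟨U, hU, hnU⟩ := h
      obtain ⟨F₀, hF₀, h'⟩ := (hS U hU).2 hnU
      exact ⟨F₀, hF₀, fun i hi x => ⟨U, hU, h' i hi x⟩⟩

/-- The filter `F × ℕ` on `ℕ × ℕ`, generated by the sets `F₀ × ℕ` with `F₀ ∈ F`. -/
def prodNatFilter (F : Filter ℕ) : Filter (ℕ × ℕ) :=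
  Filter.generate {s | ∃ F₀ ∈ F, s = F₀ ×ˢ (Set.univ : Set ℕ)}

/-!
Say that `A` absorbs `W` if `A ⊕ W ≃ₜ A`. The heart of the proof is that `T_{γ+1}` absorbs
`⊕_ℕ T_γ`: homogeneity and `F ≅ F × ℕ` give `S ∈ F` with infinite complement and `F↾S ≅ F`, and
splitting the fibres of `({n} × T_γ)ₙ ∪_F {∞}` along `S` and `Sᶜ` exhibits this space as a copy
of itself plus `⊕_{Sᶜ} T_γ`.

The theorem then follows by induction on `α`, for families indexed by any countable type. At a
successor `γ + 1` every `X_n` is `T_γ` or, by induction, absorbed by `T_γ`, hence absorbed by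
`⊕_ℕ T_γ`, and `⊕_ℕ T_γ` absorbs countably many such pieces at once. At a limit `α`, where
`T_α = ⊕_{β<α} T_β`, the `X_n` are grouped according to `β_n + 1 < α` and each group is absorbed
by the summand `T_{β_n+1}`.
-/

open Set Filter Topology

namespace Homeomorph

variable {ι κ : Type*} {Z : Type*} [TopologicalSpace Z]

def sigmaCongrRight {A B : ι → Type*} [∀ i, TopologicalSpace (A i)]
    [∀ i, TopologicalSpace (B i)] (φ : ∀ i, A i ≃ₜ B i) : (Σ i, A i) ≃ₜ Σ i, B i where
  toEquiv := Equiv.sigmaCongrRight fun i => (φ i).toEquiv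
  continuous_toFun := continuous_sigma fun i => continuous_sigmaMk.comp (φ i).continuous
  continuous_invFun := continuous_sigma fun i => continuous_sigmaMk.comp (φ i).symm.continuous

def sigmaSumDistrib (A B : ι → Type*) [∀ i, TopologicalSpace (A i)]
    [∀ i, TopologicalSpace (B i)] : (Σ i, A i ⊕ B i) ≃ₜ (Σ i, A i) ⊕ (Σ i, B i) where
  toEquiv := Equiv.sigmaSumDistrib A B
  continuous_toFun := continuous_sigma fun _ => continuous_sigmaMk.sumMap continuous_sigmaMk
  continuous_invFun := (Continuous.sigma_map fun _ => continuous_inl).sumElim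
    (Continuous.sigma_map fun _ => continuous_inr)

def sumSigmaDistrib (A : ι ⊕ κ → Type*) [∀ i, TopologicalSpace (A i)] :
    (Σ i, A i) ≃ₜ (Σ i, A (.inl i)) ⊕ (Σ k, A (.inr k)) where
  toEquiv := Equiv.sumSigmaDistrib A
  continuous_toFun := continuous_sigma fun
    | .inl _ => continuous_inl.comp continuous_sigmaMk
    | .inr _ => continuous_inr.comp continuous_sigmaMk
  continuous_invFun := (continuous_sigma fun _ => continuous_sigmaMk).sumElim
    (continuous_sigma fun _ => continuous_sigmaMk)

def sigmaAssoc {A : ι → Type*} (B : ∀ i, A i → Type*) [∀ i a, TopologicalSpace (B i a)] :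
    (Σ p : Σ i, A i, B p.1 p.2) ≃ₜ Σ i, Σ a, B i a where
  toEquiv := Equiv.sigmaAssoc B
  continuous_toFun := continuous_sigma fun p =>
    (continuous_sigmaMk (σ := fun i => Σ a, B i a) (i := p.1)).comp
      (continuous_sigmaMk (σ := B p.1) (i := p.2))
  continuous_invFun := continuous_sigma fun i => continuous_sigma fun a =>
    continuous_sigmaMk (σ := fun p : Σ i, A i => B p.1 p.2) (i := ⟨i, a⟩)

def uniqueSigma (A : ι → Type*) [∀ i, TopologicalSpace (A i)] [Unique ι] :
    (Σ i, A i) ≃ₜ A default where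
  toEquiv := Equiv.uniqueSigma A
  continuous_toFun := continuous_sigma fun i => by
    obtain rfl := Unique.eq_default i
    exact continuous_id
  continuous_invFun := continuous_sigmaMk

def sigmaFiberEquiv (f : ι → κ) (A : ι → Type*) [∀ i, TopologicalSpace (A i)] :
    (Σ k, Σ i : {i // f i = k}, A i) ≃ₜ Σ i, A i where
  toFun p := ⟨p.2.1, p.2.2⟩
  invFun p := ⟨f p.1, ⟨p.1, rfl⟩, p.2⟩
  left_inv := by rintro ⟨_, ⟨i, rfl⟩, x⟩; rfl
  right_inv _ := rfl
  continuous_toFun := continuous_sigma fun _ => continuous_sigma fun _ => continuous_sigmaMk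
  continuous_invFun := continuous_sigma fun i =>
    (continuous_sigmaMk (σ := fun k => Σ j : {j // f j = k}, A j)).comp
      (continuous_sigmaMk (σ := fun j : {j // f j = f i} => A j) (i := ⟨i, rfl⟩))

def sigmaConstCongr (e : ι ≃ κ) : (Σ _ : ι, Z) ≃ₜ Σ _ : κ, Z where
  toFun p := ⟨e p.1, p.2⟩
  invFun p := ⟨e.symm p.1, p.2⟩
  left_inv p := by simp
  right_inv p := by simp
  continuous_toFun := continuous_sigma fun i => continuous_sigmaMk (σ := fun _ => Z) (i := e i)
  continuous_invFun := continuous_sigma fun k =>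
    continuous_sigmaMk (σ := fun _ => Z) (i := e.symm k)

end Homeomorph

def AbsorbsSummand (A W : Type*) [TopologicalSpace A] [TopologicalSpace W] : Prop :=
  Nonempty (A ⊕ W ≃ₜ A)

namespace AbsorbsSummand

variable {ι κ : Type*} {A A' B W W' Z : Type*} [TopologicalSpace A] [TopologicalSpace A']
  [TopologicalSpace B] [TopologicalSpace W] [TopologicalSpace W'] [TopologicalSpace Z]
  {X : ι → Type*} [∀ i, TopologicalSpace (X i)]

theorem congr_left (e : A ≃ₜ A') (h : AbsorbsSummand A W) : AbsorbsSummand A' W :=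
  ⟨(e.symm.sumCongr (.refl W)).trans (h.some.trans e)⟩

theorem congr_right (e : W ≃ₜ W') (h : AbsorbsSummand A W) : AbsorbsSummand A W' :=
  ⟨((Homeomorph.refl A).sumCongr e.symm).trans h.some⟩

theorem trans (hB : AbsorbsSummand A B) (hW : AbsorbsSummand B W) : AbsorbsSummand A W :=
  ⟨(hB.some.symm.sumCongr (.refl W)).trans <| (Homeomorph.sumAssoc A B W).trans <|
    ((Homeomorph.refl A).sumCongr hW.some).trans hB.some⟩

theorem of_isEmpty [IsEmpty W] : AbsorbsSummand A W :=
  ⟨Homeomorph.sumEmpty A W⟩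

theorem sigma {Y : ι → Type*} [∀ i, TopologicalSpace (Y i)]
    (h : ∀ i, AbsorbsSummand (Y i) (X i)) : AbsorbsSummand (Σ i, Y i) (Σ i, X i) :=
  ⟨(Homeomorph.sigmaSumDistrib Y X).symm.trans <| Homeomorph.sigmaCongrRight fun i => (h i).some⟩

theorem sigma_of_fibers {Y : κ → Type*} [∀ k, TopologicalSpace (Y k)] (e : A ≃ₜ Σ k, Y k)
    (g : ι → κ) (h : ∀ k, AbsorbsSummand (Y k) (Σ i : {i // g i = k}, X i)) :
    AbsorbsSummand A (Σ i, X i) :=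
  ((sigma h).congr_right (Homeomorph.sigmaFiberEquiv g X)).congr_left e.symm

theorem sigma_nat_sigma_const [Countable κ] : AbsorbsSummand (Σ _ : ℕ, Z) (Σ _ : κ, Z) := by
  obtain ⟨_⟩ := nonempty_denumerable (ℕ ⊕ κ)
  exact ⟨(Homeomorph.sumSigmaDistrib fun _ : ℕ ⊕ κ => Z).symm.trans
    (Homeomorph.sigmaConstCongr (Denumerable.eqv (ℕ ⊕ κ)))⟩

theorem sigma_nat_self : AbsorbsSummand (Σ _ : ℕ, Z) Z :=
  sigma_nat_sigma_const.congr_right (Homeomorph.uniqueSigma fun _ : Unit => Z)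

theorem sigma_nat_sigma_sigma_nat [Countable ι] :
    AbsorbsSummand (Σ _ : ℕ, Z) (Σ _ : ι, Σ _ : ℕ, Z) :=
  sigma_nat_sigma_const.congr_right <|
    (Homeomorph.sigmaConstCongr (Equiv.sigmaEquivProd ι ℕ).symm).trans
      (Homeomorph.sigmaAssoc fun (_ : ι) (_ : ℕ) => Z)

theorem sigma_of_sigma_nat [Countable ι] (hA : AbsorbsSummand A (Σ _ : ℕ, B))
    (hX : ∀ i, Nonempty (X i ≃ₜ B) ∨ AbsorbsSummand B (X i)) :
    AbsorbsSummand A (Σ i, X i) :=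
  hA.trans <| sigma_nat_sigma_sigma_nat.trans <| sigma fun i =>
    (hX i).elim (fun ⟨e⟩ => sigma_nat_self.congr_right e.symm) sigma_nat_self.trans

end AbsorbsSummand

theorem Filter.preimage_val_mem_comap_iff {I : Type*} {G : Filter I} {S A : Set I}
    (hS : S ∈ G) : ((↑) : S → I) ⁻¹' A ∈ G.comap (↑) ↔ A ∈ G := by
  refine ⟨fun h => ?_, preimage_mem_comap⟩
  obtain ⟨t, ht, hsub⟩ := mem_comap.1 h
  exact mem_of_superset (inter_mem ht hS) fun i hi => hsub (show ⟨i, hi.2⟩ ∈ _ from hi.1)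

def FSum {I : Type*} (_ : Filter I) (X : I → Type*) : Type _ := Option (Σ i, X i)

namespace FSum

variable {I J : Type*} {G : Filter I} {X : I → Type*} [∀ i, TopologicalSpace (X i)]
  {Z : Type*} [TopologicalSpace Z]

instance : TopologicalSpace (FSum G X) := fSum G X

theorem isOpen_iff {U : Set (FSum G X)} :
    IsOpen U ↔ (∀ i, IsOpen {x : X i | some ⟨i, x⟩ ∈ U}) ∧
      (none ∈ U → {i | ∀ x : X i, some ⟨i, x⟩ ∈ U} ∈ G) :=
  and_congr_right' <| imp_congr_right fun _ =>
    ⟨fun ⟨_, hF₀, hU⟩ => mem_of_superset hF₀ hU, fun h => ⟨_, h, fun _ hi => hi⟩⟩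

def congr {G' : Filter J} (σ : I ≃ J) (h : G.map σ = G') :
    FSum G (fun _ => Z) ≃ₜ FSum G' (fun _ => Z) :=
  let e : Option (Σ _ : I, Z) ≃ Option (Σ _ : J, Z) :=
    { toFun := Option.map fun p => ⟨σ p.1, p.2⟩
      invFun := Option.map fun p => ⟨σ.symm p.1, p.2⟩
      left_inv := by rintro (_ | ⟨i, x⟩) <;> simp
      right_inv := by rintro (_ | ⟨j, x⟩) <;> simp }
  @Equiv.toHomeomorph (FSum G _) (FSum G' _) _ _ e fun U => by
    rw [isOpen_iff, isOpen_iff, ← h]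
    exact and_congr (σ.forall_congr_right
      (q := fun j => IsOpen {x : Z | (some ⟨j, x⟩ : Option (Σ _ : J, Z)) ∈ U})) Iff.rfl

open scoped Classical in
noncomputable def splitCompl {S : Set I} (hS : S ∈ G) :
    FSum G X ≃ₜ FSum (G.comap ((↑) : S → I)) (fun i => X i) ⊕ Σ i : ↥Sᶜ, X i :=
  let e : Option (Σ i : S, X i) ⊕ (Σ i : ↥Sᶜ, X i) ≃ Option (Σ i, X i) :=
    { toFun := Sum.elim (Option.map fun p => ⟨p.1, p.2⟩) fun p => some ⟨p.1, p.2⟩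
      invFun := fun o => o.elim (.inl none) fun p =>
        if h : p.1 ∈ S then .inl (some ⟨⟨p.1, h⟩, p.2⟩) else .inr ⟨⟨p.1, h⟩, p.2⟩
      left_inv := by
        rintro ((_ | ⟨⟨i, hi⟩, x⟩) | ⟨⟨i, hi⟩, x⟩)
        · rfl
        · simp [hi]
        · simp [show i ∉ S from hi]
      right_inv := by
        rintro (_ | ⟨i, x⟩)
        · rfl
        · by_cases hi : i ∈ S <;> simp [hi] }
  Homeomorph.symm <| @Equiv.toHomeomorph (FSum _ _ ⊕ _) (FSum G X) _ _ e fun U => by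
    rw [isOpen_sum_iff, isOpen_iff, isOpen_sigma_iff, isOpen_iff]
    refine ⟨fun ⟨⟨hin, hG⟩, hout⟩ => ⟨fun i => ?_, (preimage_val_mem_comap_iff hS).1 ∘ hG⟩,
      fun ⟨hU, hG⟩ => ⟨⟨fun i => hU i, (preimage_val_mem_comap_iff hS).2 ∘ hG⟩, fun i => hU i⟩⟩
    by_cases hi : i ∈ S
    exacts [hin ⟨i, hi⟩, hout ⟨i, hi⟩]

theorem absorbsSummand_sigma_compl {S : Set I} (hS : S ∈ G) (e : S ≃ I)
    (he : (G.comap (↑)).map e = G) : AbsorbsSummand (FSum G fun _ => Z) (Σ _ : ↥Sᶜ, Z) :=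
  ⟨((splitCompl hS).trans ((congr e he).sumCongr (.refl _))).symm⟩

end FSum

def IsHomogeneous (F : Filter ℕ) : Prop :=
  ∀ X : Set ℕ, (∀ s ∈ F, (X ∩ s).Nonempty) →
    ∃ e : X ≃ ℕ, ∀ A : Set ℕ, A ∈ F ↔ e ⁻¹' A ∈ Filter.comap (Subtype.val : X → ℕ) F

theorem IsHomogeneous.exists_mem_ne_univ {F : Filter ℕ} (hF : IsHomogeneous F) :
    ∃ A ∈ F, A ≠ univ := by
  by_contra! h
  obtain ⟨e, -⟩ := hF {0} fun s hs => ⟨0, rfl, (h s hs).symm ▸ mem_univ 0⟩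
  have : Finite ℕ := .of_equiv _ e
  exact not_finite ℕ

theorem Equiv.infinite_preimage_prod_univ {α β γ : Type*} [Infinite γ] (t : α ≃ β × γ)
    {A : Set β} (hA : A.Nonempty) : (t ⁻¹' (A ×ˢ univ)).Infinite := by
  obtain ⟨b, hb⟩ := hA
  exact infinite_of_injective_forall_mem (f := fun c => t.symm (b, c))
    (fun c c' h => by simpa using h) fun c => by simp [hb]

theorem IsHomogeneous.exists_mem_infinite_compl_map_comap_eq {F : Filter ℕ}
    (hF : IsHomogeneous F) (t : ℕ ≃ ℕ × ℕ) (ht : ∀ A ∈ F, t ⁻¹' (A ×ˢ univ) ∈ F) :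
    ∃ S ∈ F, Sᶜ.Infinite ∧ ∃ e : S ≃ ℕ, (F.comap (↑)).map e = F := by
  obtain ⟨A₀, hA₀, hA₀_ne⟩ := hF.exists_mem_ne_univ
  obtain ⟨a, ha⟩ := (ne_univ_iff_exists_notMem A₀).1 hA₀_ne
  -- `a + 1` keeps `S` infinite when `F = ⊥`, where homogeneity says nothing
  set A := insert (a + 1) A₀
  set S := t ⁻¹' (A ×ˢ univ)
  have hS : S ∈ F := ht A (mem_of_superset hA₀ (subset_insert _ _))
  have hSc : Sᶜ.Infinite :=
    (t.infinite_preimage_prod_univ (A := Aᶜ) ⟨a, by simp [A, ha]⟩).mono fun _ hx h => hx.1 h.1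
  refine ⟨S, hS, hSc, ?_⟩
  rcases F.eq_or_neBot with rfl | _
  · have := (t.infinite_preimage_prod_univ (insert_nonempty (a + 1) A₀)).to_subtype
    exact ⟨(Nat.Subtype.orderIsoOfNat S).toEquiv.symm, by simp⟩
  · obtain ⟨e, he⟩ := hF S fun s hs => nonempty_of_mem (inter_mem hS hs)
    exact ⟨e, Filter.ext fun B => (he B).symm⟩

theorem absorbsSummand_sigma_of_lt {T : Ordinal → Type*} [∀ α, TopologicalSpace (T α)]
    (hsucc : ∀ γ, AbsorbsSummand (T (γ + 1)) (Σ _ : ℕ, T γ))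
    (hlim : ∀ α, Order.IsSuccLimit α → Nonempty (T α ≃ₜ Σ β : Iio α, T β.1))
    (α : Ordinal) {ι : Type} [Countable ι] (X : ι → Type*) [∀ i, TopologicalSpace (X i)]
    (hX : ∀ i, ∃ β < α, Nonempty (X i ≃ₜ T β)) : AbsorbsSummand (T α) (Σ i, X i) := by
  induction α using WellFoundedLT.induction generalizing ι with | _ α IH =>
  rcases Ordinal.zero_or_succ_or_isSuccLimit α with rfl | ⟨γ, rfl⟩ | hα
  · have : IsEmpty ι := ⟨fun i => by
      obtain ⟨β, hβ, -⟩ := hX i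
      exact not_lt_zero hβ⟩
    exact .of_isEmpty
  · rw [Order.succ_eq_add_one] at hX IH ⊢
    refine (hsucc γ).sigma_of_sigma_nat fun i => ?_
    obtain ⟨β, hβ, e⟩ := hX i
    rcases (Order.lt_add_one_iff.1 hβ).eq_or_lt with rfl | hβγ
    · exact .inl e
    · exact .inr <| (IH γ (Order.lt_add_one_iff.2 le_rfl) (fun _ : Unit => X i)
        fun _ => ⟨β, hβγ, e⟩).congr_right (Homeomorph.uniqueSigma _)
  · choose β hβ e using hX
    refine .sigma_of_fibers (hlim α hα).some (fun i => ⟨Order.succ (β i), hα.succ_lt (hβ i)⟩)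
      fun b => IH b.1 b.2 _ fun ⟨i, hi⟩ => ⟨β i, ?_, e i⟩
    rw [← hi]
    exact Order.lt_succ (β i)

theorem T_sum_homeomorph_general (F : Filter ℕ)
    (hhom : ∀ X : Set ℕ, (∀ s ∈ F, (X ∩ s).Nonempty) →
      ∃ e : X ≃ ℕ, ∀ A : Set ℕ,
        A ∈ F ↔ e ⁻¹' A ∈ Filter.comap (Subtype.val : X → ℕ) F)
    (hprod : ∃ t : ℕ ≃ ℕ × ℕ, ∀ B : Set (ℕ × ℕ),
      B ∈ prodNatFilter F ↔ t ⁻¹' B ∈ F)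
    (T : Ordinal → Type*) [∀ α, TopologicalSpace (T α)]
    (hsucc : ∀ α : Ordinal,
      Nonempty (@Homeomorph (T (α + 1)) (Option (Σ _ : ℕ, T α)) _ (fSum F fun _ : ℕ => T α)))
    (hlim : ∀ α : Ordinal, Order.IsSuccLimit α → Nonempty (T α ≃ₜ Σ β : Set.Iio α, T β.1)) :
    ∀ (α : Ordinal) (X : ℕ → Type*) (_ : ∀ n, TopologicalSpace (X n)),
      (∀ n : ℕ, ∃ β < α, Nonempty (X n ≃ₜ T β)) →
      Nonempty (T α ≃ₜ (T α ⊕ Σ n : ℕ, X n)) := by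
  obtain ⟨t, ht⟩ := hprod
  obtain ⟨S, hS, hSc, e, he⟩ := IsHomogeneous.exists_mem_infinite_compl_map_comap_eq hhom t
    fun A hA => (ht _).1 (mem_generate_of_mem ⟨A, hA, rfl⟩)
  have := hSc.to_subtype
  have hT (γ : Ordinal) : AbsorbsSummand (T (γ + 1)) (Σ _ : ℕ, T γ) := by
    have hγ : T (γ + 1) ≃ₜ FSum F fun _ => T γ := (hsucc γ).some
    exact ((FSum.absorbsSummand_sigma_compl hS e he).congr_right
      (Homeomorph.sigmaConstCongr (Nat.Subtype.orderIsoOfNat _).toEquiv.symm)).congr_left hγ.symm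
  intro α X _ hX
  exact ⟨(absorbsSummand_sigma_of_lt hT hlim α X hX).some.symm⟩

/-- Lemma 2.6: if `F` is homogeneous, isomorphic to `F × ℕ`, and not the cofinite
filter, and `T_α` are the associated scattered spaces (`T₀ = ∅`, `T₁` a point,
`T_{α+1} = ({n} × T_α)ₙ ∪_F {∞}`, `T_α = ⊕_{β<α} T_β` at limits), then each `T_α` is
homeomorphic to any topological sum of `T_α` with countably many `T_{β_n}`, `β_n < α`. -/
theorem T_sum_homeomorph (F : Filter ℕ)
    (hhom : ∀ X : Set ℕ, (∀ s ∈ F, (X ∩ s).Nonempty) →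
      ∃ e : X ≃ ℕ, ∀ A : Set ℕ,
        A ∈ F ↔ e ⁻¹' A ∈ Filter.comap (Subtype.val : X → ℕ) F)
    (hprod : ∃ t : ℕ ≃ ℕ × ℕ, ∀ B : Set (ℕ × ℕ),
      B ∈ prodNatFilter F ↔ t ⁻¹' B ∈ F)
    (hncof : F ≠ Filter.cofinite)
    (T : Ordinal → Type*) [∀ α, TopologicalSpace (T α)]
    (h0 : Nonempty (T 0 ≃ₜ PEmpty))
    (h1 : Nonempty (T 1 ≃ₜ PUnit))
    (hsucc : ∀ α : Ordinal,
      Nonempty (@Homeomorph (T (α + 1)) (Option (Σ _ : ℕ, T α)) _ (fSum F fun _ : ℕ => T α)))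
    (hlim : ∀ α : Ordinal, Order.IsSuccLimit α → Nonempty (T α ≃ₜ Σ β : Set.Iio α, T β.1)) :
    ∀ (α : Ordinal) (X : ℕ → Type*) (_ : ∀ n, TopologicalSpace (X n)),
      (∀ n : ℕ, ∃ β < α, Nonempty (X n ≃ₜ T β)) →
      Nonempty (T α ≃ₜ (T α ⊕ Σ n : ℕ, X n)) :=
  T_sum_homeomorph_general F hhom hprod T hsucc hlim
end
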